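/- arXiv:2510.04053 — 5 statements merged into one kernel-verified Lean document; each statement's English description precedes it below -/
import Mathlib

section
/- If Z_1, ..., Z_{n+1} are exchangeable real-valued random variables, then for any α ∈ (0,1), the probability that Z_{n+1} is at most the ⌈(1-α)(n+1)⌉-th smallest value among Z_1, ..., Z_n (with the convention that this quantile is +∞ if ⌈(1-α)(n+1)⌉ > n) is at least 1 - α. -/
open MeasureTheory
open scoped ENNReal

noncomputable def orderStat (l : List ℝ) (k : ℕ) : ℝ :=
  (l.mergeSort (fun a b => decide (a ≤ b))).getD (k - 1) 0

def Exchangeable {Ω α ι : Type*} [MeasurableSpace Ω] [MeasurableSpace α]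
    (P : Measure Ω) (Z : ι → Ω → α) : Prop :=
  ∀ σ : Equiv.Perm ι,
    Measure.map (fun ω i => Z (σ i) ω) P = Measure.map (fun ω i => Z i ω) P


lemma countP_ofFn {m : ℕ} (v : Fin m → ℝ) (q : ℝ → Bool) :
    (List.ofFn v).countP q = (Finset.univ.filter fun i => q (v i)).card := by
  induction m with
  | zero => simp
  | succ m ih =>
    rw [List.ofFn_succ, List.countP_cons, ih]
    rw [Finset.card_filter, Finset.card_filter, Fin.sum_univ_succ]
    simp [add_comm]

lemma countP_eq_card {L : List ℝ} (q : ℝ → Bool) :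
    L.countP q = (Finset.univ.filter fun i : Fin L.length => q (L.get i)).card := by
  conv_lhs => rw [← List.ofFn_get L]
  exact countP_ofFn _ _

lemma card_le_countP_le {L : List ℝ} (hL : L.Pairwise (· ≤ ·)) {p : ℕ} (hp : p < L.length) {t : ℝ}
    (ht : L.get ⟨p, hp⟩ ≤ t) :
    p + 1 ≤ L.countP (fun x => decide (x ≤ t)) := by
  rw [countP_eq_card]
  have h1 : p + 1 = (Finset.range (p+1)).card := by simp
  rw [h1]
  apply Finset.card_le_card_of_injOn (fun j => ⟨j % L.length, Nat.mod_lt _ (by omega)⟩)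
  · intro j hj
    simp only [Finset.mem_coe, Finset.mem_range] at hj
    have hjl : j < L.length := by omega
    simp only [Finset.mem_coe, Finset.mem_filter, Finset.mem_univ, true_and, decide_eq_true_eq]
    have : L.get ⟨j % L.length, Nat.mod_lt _ (by omega)⟩ ≤ L.get ⟨p, hp⟩ := by
      apply hL.rel_get_of_le
      simp [Fin.le_def, Nat.mod_eq_of_lt hjl]; omega
    linarith
  · intro a ha b hb hab
    simp only [Finset.mem_coe, Finset.mem_range] at ha hb
    have : a % L.length = b % L.length := by simpa [Fin.ext_iff] using hab
    rwa [Nat.mod_eq_of_lt (by omega), Nat.mod_eq_of_lt (by omega)] at this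

lemma countP_lt_le {L : List ℝ} (hL : L.Pairwise (· ≤ ·)) {p : ℕ} (hp : p < L.length) :
    L.countP (fun x => decide (x < L.get ⟨p, hp⟩)) ≤ p := by
  rw [countP_eq_card]
  have h1 : ((Finset.range p).card) = p := by simp
  refine le_trans ?_ h1.le
  apply Finset.card_le_card_of_injOn (fun i : Fin L.length => (i : ℕ))
  · intro i hi
    simp only [Finset.mem_coe, Finset.mem_filter, Finset.mem_univ, true_and, decide_eq_true_eq] at hi
    simp only [Finset.mem_coe, Finset.mem_range]
    by_contra hc
    push_neg at hc
    have : L.get ⟨p, hp⟩ ≤ L.get i := hL.rel_get_of_le (by simpa [Fin.le_def] using hc)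
    linarith
  · intro a _ b _ hab; exact Fin.ext hab

-- counts over Fin m via sorted lists
lemma card_filter_eq_countP {m : ℕ} (v : Fin m → ℝ) (q : ℝ → Bool) :
    (Finset.univ.filter fun i => q (v i)).card
      = ((List.ofFn v).mergeSort (fun a b => decide (a ≤ b))).countP q := by
  rw [← countP_ofFn, List.Perm.countP_eq _ (List.mergeSort_perm _ _)]

lemma count_lemma {m : ℕ} (v : Fin m → ℝ) {k : ℕ} (hk1 : 1 ≤ k) (hkm : k ≤ m) :
    k ≤ (Finset.univ.filter fun j =>
        (Finset.univ.filter fun i => v i < v j).card < k).card := by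
  classical
  set L := (List.ofFn v).mergeSort (fun a b => decide (a ≤ b)) with hLdef
  have hsort : L.Pairwise (· ≤ ·) := List.pairwise_mergeSort' _ _
  have hlen : L.length = m := by
    rw [hLdef, (List.mergeSort_perm _ _).length_eq, List.length_ofFn]
  have hkL : k - 1 < L.length := by omega
  set t := L.get ⟨k - 1, hkL⟩ with htdef
  -- at least k indices j with v j ≤ t
  have h1 : k ≤ (Finset.univ.filter fun j => v j ≤ t).card := by
    have := card_le_countP_le hsort hkL (le_refl t)
    have e := card_filter_eq_countP v (fun x => decide (x ≤ t))
    simp only [decide_eq_true_eq] at e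
    rw [← hLdef] at e
    rw [e]
    omega
  refine h1.trans (Finset.card_le_card ?_)
  intro j hj
  simp only [Finset.mem_filter, Finset.mem_univ, true_and] at hj ⊢
  -- # {i | v i < v j} ≤ # {i | v i < t} ≤ k - 1 < k
  have h2 : (Finset.univ.filter fun i => v i < v j).card
      ≤ (Finset.univ.filter fun i => v i < t).card := by
    apply Finset.card_le_card
    intro i hi
    simp only [Finset.mem_filter, Finset.mem_univ, true_and] at hi ⊢
    linarith
  have h3 : (Finset.univ.filter fun i => v i < t).card ≤ k - 1 := by
    have := countP_lt_le hsort hkL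
    have e := card_filter_eq_countP v (fun x => decide (x < t))
    simp only [decide_eq_true_eq] at e
    rw [← hLdef] at e
    rw [e]
    exact this
  omega

lemma le_orderStat {m : ℕ} (w : Fin m → ℝ) (z : ℝ) {k : ℕ} (hk1 : 1 ≤ k) (hkm : k ≤ m)
    (h : (Finset.univ.filter fun i => w i < z).card < k) :
    z ≤ orderStat (List.ofFn w) k := by
  classical
  set L := (List.ofFn w).mergeSort (fun a b => decide (a ≤ b)) with hLdef
  have hsort : L.Pairwise (· ≤ ·) := List.pairwise_mergeSort' _ _
  have hlen : L.length = m := by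
    rw [hLdef, (List.mergeSort_perm _ _).length_eq, List.length_ofFn]
  have hkL : k - 1 < L.length := by omega
  have hval : orderStat (List.ofFn w) k = L.get ⟨k - 1, hkL⟩ := by
    rw [orderStat, ← hLdef, List.getD_eq_getElem _ _ (by omega)]
    rfl
  rw [hval]
  by_contra hc
  push_neg at hc
  -- all positions ≤ k-1 have value < z, so countP (· < z) ≥ k
  have h1 : k ≤ L.countP (fun x => decide (x < z)) := by
    have h2 : k ≤ L.countP (fun x => decide (x ≤ L.get ⟨k-1, hkL⟩)) := by
      have := card_le_countP_le hsort hkL (le_refl _)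
      omega
    refine h2.trans (List.countP_mono_left ?_)
    intro x _ hx
    simp only [decide_eq_true_eq] at hx ⊢
    linarith
  have e := card_filter_eq_countP w (fun x => decide (x < z))
  simp only [decide_eq_true_eq] at e
  rw [← hLdef] at e
  omega

/-- conformal coverage lower bound.  If Z_1, ..., Z_{n+1} are exchangeable,
then the probability that Z_{n+1} is at most the ⌈(1-α)(n+1)⌉-th smallest of Z_1, ..., Z_n
(with the convention that this quantile is +∞, i.e. the event always holds, if
⌈(1-α)(n+1)⌉ > n) is at least 1 - α. -/
theorem stmt_1 {Ω : Type*} [MeasurableSpace Ω] (P : Measure Ω) [IsProbabilityMeasure P]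
    (n : ℕ) (Z : Fin (n + 1) → Ω → ℝ) (hZ : ∀ i, Measurable (Z i))
    (hexch : Exchangeable P Z) (α : ℝ) (hα : α ∈ Set.Ioo (0:ℝ) 1) :
    1 - α ≤ (P {ω | n < ⌈(1 - α) * (n + 1)⌉₊ ∨
      Z (Fin.last n) ω ≤
        orderStat (List.ofFn fun i : Fin n => Z i.castSucc ω) ⌈(1 - α) * (n + 1)⌉₊}).toReal := by
  classical
  obtain ⟨hα0, hα1⟩ := hα
  set k := ⌈(1 - α) * (n + 1)⌉₊ with hkdef
  by_cases hkn : n < k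
  · have hE : {ω : Ω | n < k ∨ Z (Fin.last n) ω ≤
        orderStat (List.ofFn fun i : Fin n => Z i.castSucc ω) k} = Set.univ :=
      Set.eq_univ_of_forall (fun ω => Or.inl hkn)
    rw [hE, measure_univ, ENNReal.toReal_one]
    linarith
  push_neg at hkn
  have hnpos : (0:ℝ) < n + 1 := by positivity
  have hk1 : 1 ≤ k := by
    rw [hkdef]
    exact Nat.one_le_iff_ne_zero.mpr (Nat.ceil_pos.mpr (by nlinarith)).ne'
  set F : Ω → (Fin (n+1) → ℝ) := fun ω i => Z i ω with hF
  have hFmeas : Measurable F := measurable_pi_lambda _ hZ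
  set S : Fin (n+1) → Set (Fin (n+1) → ℝ) :=
    fun j => {v | (Finset.univ.filter fun i => v i < v j).card < k} with hS
  have hSmeas : ∀ j, MeasurableSet (S j) := by
    intro j
    have hm : Measurable fun v : Fin (n+1) → ℝ =>
        ((Finset.univ.filter fun i => v i < v j).card : ℕ) := by
      have he : ∀ v : Fin (n+1) → ℝ, (Finset.univ.filter fun i => v i < v j).card
          = ∑ i : Fin (n+1), if v i < v j then 1 else 0 :=
        fun v => Finset.card_filter _ _
      simp only [he]
      apply Finset.measurable_sum
      intro i _
      exact Measurable.ite (measurableSet_lt (measurable_pi_apply i) (measurable_pi_apply j))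
        measurable_const measurable_const
    exact hm measurableSet_Iio
  set A : Fin (n+1) → Set Ω := fun j => F ⁻¹' S j with hA
  have hAmeas : ∀ j, MeasurableSet (A j) := fun j => hFmeas (hSmeas j)
  have hswap : ∀ j, P (A j) = P (A (Fin.last n)) := by
    intro j
    set σ : Equiv.Perm (Fin (n+1)) := Equiv.swap (Fin.last n) j with hσ
    have hσmeas : Measurable (fun ω i => Z (σ i) ω) :=
      measurable_pi_lambda _ (fun i => hZ (σ i))
    have hpre : (fun ω i => Z (σ i) ω) ⁻¹' S (Fin.last n) = A j := by
      ext ω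
      simp only [hA, hS, Set.mem_preimage, Set.mem_setOf_eq, hF]
      have hc : (Finset.univ.filter fun i => Z (σ i) ω < Z (σ (Fin.last n)) ω).card
          = (Finset.univ.filter fun i => Z i ω < Z j ω).card := by
        have h1 : σ (Fin.last n) = j := Equiv.swap_apply_left _ _
        rw [h1]
        exact Finset.card_equiv σ (fun i => by simp)
      rw [hc]
    calc P (A j) = P ((fun ω i => Z (σ i) ω) ⁻¹' S (Fin.last n)) := by rw [hpre]
      _ = Measure.map (fun ω i => Z (σ i) ω) P (S (Fin.last n)) :=
          (Measure.map_apply hσmeas (hSmeas _)).symm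
      _ = Measure.map F P (S (Fin.last n)) := by rw [hexch σ]
      _ = P (A (Fin.last n)) := Measure.map_apply hFmeas (hSmeas _)
  have hpoint : ∀ ω, (k : ℝ≥0∞) ≤ ∑ j : Fin (n+1), (A j).indicator (fun _ => (1:ℝ≥0∞)) ω := by
    intro ω
    have h1 : ∑ j : Fin (n+1), (A j).indicator (fun _ => (1:ℝ≥0∞)) ω
        = ((Finset.univ.filter fun j =>
            (Finset.univ.filter fun i => Z i ω < Z j ω).card < k).card : ℝ≥0∞) := by
      rw [Finset.card_filter]
      push_cast
      apply Finset.sum_congr rfl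
      intro j _
      have hmem : ω ∈ A j ↔ (Finset.univ.filter fun i => Z i ω < Z j ω).card < k := Iff.rfl
      by_cases h : (Finset.univ.filter fun i => Z i ω < Z j ω).card < k
      · simp [Set.indicator_apply, hmem.mpr h, h]
      · have hnot : ω ∉ A j := fun hh => h (hmem.mp hh)
        simp [Set.indicator_apply, hnot, h]
    rw [h1]
    exact_mod_cast count_lemma (fun i => Z i ω) hk1 (by omega : k ≤ n + 1)
  have hsum : (k : ℝ≥0∞) ≤ (n + 1 : ℕ) * P (A (Fin.last n)) := by
    calc (k : ℝ≥0∞) = ∫⁻ _, (k : ℝ≥0∞) ∂P := by simp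
      _ ≤ ∫⁻ ω, ∑ j : Fin (n+1), (A j).indicator (fun _ => (1:ℝ≥0∞)) ω ∂P :=
          lintegral_mono hpoint
      _ = ∑ j : Fin (n+1), ∫⁻ ω, (A j).indicator (fun _ => (1:ℝ≥0∞)) ω ∂P :=
          lintegral_finset_sum _ (fun j _ => measurable_const.indicator (hAmeas j))
      _ = ∑ j : Fin (n+1), P (A j) := by
          refine Finset.sum_congr rfl (fun j _ => ?_)
          rw [lintegral_indicator (hAmeas j)]
          simp
      _ = ∑ _j : Fin (n+1), P (A (Fin.last n)) := Finset.sum_congr rfl (fun j _ => hswap j)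
      _ = (n + 1 : ℕ) * P (A (Fin.last n)) := by
          rw [Finset.sum_const, Finset.card_univ, Fintype.card_fin, nsmul_eq_mul]
  have hreal : (k : ℝ) ≤ (n + 1) * (P (A (Fin.last n))).toReal := by
    have h2 := ENNReal.toReal_mono (by finiteness) hsum
    rw [ENNReal.toReal_mul] at h2
    simpa [ENNReal.toReal_add] using h2
  have hsub : A (Fin.last n) ⊆ {ω : Ω | n < k ∨ Z (Fin.last n) ω ≤
      orderStat (List.ofFn fun i : Fin n => Z i.castSucc ω) k} := by
    intro ω hω
    right
    have hω' : (Finset.univ.filter fun i : Fin (n+1) => Z i ω < Z (Fin.last n) ω).card < k := hω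
    have hcard : (Finset.univ.filter
        fun i : Fin n => Z i.castSucc ω < Z (Fin.last n) ω).card < k := by
      refine lt_of_le_of_lt ?_ hω'
      apply Finset.card_le_card_of_injOn (fun i : Fin n => i.castSucc)
      · intro i hi
        simp only [Finset.mem_coe, Finset.mem_filter, Finset.mem_univ, true_and] at hi ⊢
        exact hi
      · intro a _ b _ h
        exact Fin.castSucc_injective _ h
    exact le_orderStat _ _ hk1 hkn hcard
  have hmono : (P (A (Fin.last n))).toReal ≤ (P {ω : Ω | n < k ∨ Z (Fin.last n) ω ≤
      orderStat (List.ofFn fun i : Fin n => Z i.castSucc ω) k}).toReal :=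
    ENNReal.toReal_mono (measure_ne_top _ _) (measure_mono hsub)
  have hceil : (1 - α) * (n + 1) ≤ (k : ℝ) := by rw [hkdef]; exact_mod_cast Nat.le_ceil _
  nlinarith [hmono, hreal, hceil]
end

section
/- If Z_1, ..., Z_{n+1} are exchangeable random variables with almost surely distinct values, then for any k ∈ {1, ..., n+1}, the probability that Z_{n+1} is among the k smallest values of Z_1, ..., Z_{n+1} is exactly k/(n+1). -/
/-!
By exchangeability, the rank `#{i | Z i ≤ Z j}` of `Z j` has the same law for every `j`. On the
almost sure event that the values are distinct, the ranks are a permutation of `1, …, N`, so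
exactly `k` of the `N` indices have rank at most `k`. Summing the `N` equal probabilities
therefore gives `k`.
-/

open MeasureTheory

open Finset
open scoped ENNReal

def coordRank {ι α : Type*} [Fintype ι] [LinearOrder α] (v : ι → α) (j : ι) : ℕ :=
  #{i | v i ≤ v j}

section Rank

variable {ι α : Type*} [Fintype ι] [LinearOrder α] (v : ι → α)

theorem coordRank_lt_coordRank {j j' : ι} (h : v j < v j') : coordRank v j < coordRank v j' :=
  card_lt_card <| (ssubset_iff_of_subset fun i hi => by
    simp only [mem_filter, mem_univ, true_and] at hi ⊢; exact hi.trans h.le).2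
    ⟨j', by simp, by simp [h]⟩

theorem coordRank_comp_perm (σ : Equiv.Perm ι) (j : ι) :
    coordRank (v ∘ σ) j = coordRank v (σ j) :=
  card_equiv σ (by simp)

variable {v}

theorem coordRank_injective (hv : Function.Injective v) : Function.Injective (coordRank v) := by
  intro j j' h
  refine hv (le_antisymm (not_lt.1 fun hlt => ?_) (not_lt.1 fun hlt => ?_))
  · exact (coordRank_lt_coordRank v hlt).ne' h
  · exact (coordRank_lt_coordRank v hlt).ne h

theorem coordRank_mem_Icc (j : ι) : coordRank v j ∈ Icc 1 (Fintype.card ι) :=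
  mem_Icc.2 ⟨card_pos.2 ⟨j, by simp⟩, card_le_univ _⟩

theorem image_coordRank (hv : Function.Injective v) :
    univ.image (coordRank v) = Icc 1 (Fintype.card ι) :=
  eq_of_subset_of_card_le (by simpa [subset_iff] using coordRank_mem_Icc)
    (by simp [card_image_of_injective _ (coordRank_injective hv)])

theorem card_coordRank_le (hv : Function.Injective v) {k : ℕ} (hk : k ≤ Fintype.card ι) :
    #{j | coordRank v j ≤ k} = k := by
  calc #{j | coordRank v j ≤ k} = #{m ∈ univ.image (coordRank v) | m ≤ k} := by
        rw [filter_image, card_image_of_injective _ (coordRank_injective hv)]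
    _ = #(Icc 1 k) := by
        rw [image_coordRank hv]
        congr 1
        ext m
        simp only [mem_filter, mem_Icc]
        omega
    _ = k := Nat.card_Icc 1 k

end Rank

theorem measurable_coordRank {ι α : Type*} [Fintype ι] [LinearOrder α] [TopologicalSpace α]
    [OrderClosedTopology α] [SecondCountableTopology α] [MeasurableSpace α] [OpensMeasurableSpace α]
    (j : ι) : Measurable fun v : ι → α => coordRank v j := by
  simp only [coordRank, card_filter]
  exact Finset.measurable_sum _ fun i _ => Measurable.ite
    (measurableSet_le (measurable_pi_apply i) (measurable_pi_apply j)) measurable_const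
    measurable_const

theorem ae_injective_of_measure_eq_zero {Ω ι α : Type*} [MeasurableSpace Ω] [Countable ι]
    {P : Measure Ω} {Z : ι → Ω → α} (hdist : ∀ i j, i ≠ j → P {ω | Z i ω = Z j ω} = 0) :
    ∀ᵐ ω ∂P, Function.Injective fun i => Z i ω := by
  have h : ∀ i j, ∀ᵐ ω ∂P, Z i ω = Z j ω → i = j := by
    intro i j
    by_cases hij : i = j
    · exact .of_forall fun _ _ => hij
    · exact measure_mono_null (fun ω hω => (Classical.not_imp.1 hω).1) (hdist i j hij)
  filter_upwards [ae_all_iff.2 fun i => ae_all_iff.2 (h i)] with ω hω i j using hω i j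

section

variable {Ω ι α : Type*} [MeasurableSpace Ω] [MeasurableSpace α] {P : Measure Ω}
  {Z : ι → Ω → α}

theorem Exchangeable.measure_preimage_comp_perm (hexch : Exchangeable P Z)
    (hZ : ∀ i, Measurable (Z i)) (σ : Equiv.Perm ι) {S : Set (ι → α)} (hS : MeasurableSet S) :
    P ((fun ω i => Z (σ i) ω) ⁻¹' S) = P ((fun ω i => Z i ω) ⁻¹' S) := by
  rw [← Measure.map_apply (measurable_pi_lambda _ fun i => hZ (σ i)) hS, hexch σ,
    Measure.map_apply (measurable_pi_lambda _ hZ) hS]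

variable [Fintype ι] [LinearOrder α] [TopologicalSpace α] [OrderClosedTopology α]
  [SecondCountableTopology α] [OpensMeasurableSpace α]

theorem sum_measure_coordRank_le [IsProbabilityMeasure P] (hZ : ∀ i, Measurable (Z i))
    (hinj : ∀ᵐ ω ∂P, Function.Injective fun i => Z i ω) {k : ℕ} (hk : k ≤ Fintype.card ι) :
    ∑ j, P {ω | coordRank (fun i => Z i ω) j ≤ k} = k := by
  set E : ι → Set Ω := fun j => {ω | coordRank (fun i => Z i ω) j ≤ k}
  have hE : ∀ j, MeasurableSet (E j) := fun j =>
    (measurable_coordRank j).comp (measurable_pi_lambda _ hZ) measurableSet_Iic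
  calc ∑ j, P (E j) = ∫⁻ ω, ∑ j, (E j).indicator 1 ω ∂P := by
        rw [lintegral_finsetSum _ fun j _ => measurable_one.indicator (hE j)]
        simp only [lintegral_indicator_one (hE _)]
    _ = ∫⁻ _, (k : ℝ≥0∞) ∂P := by
        refine lintegral_congr_ae ?_
        filter_upwards [hinj] with ω hω
        simp only [Set.indicator_apply, Pi.one_apply, sum_boole]
        exact congrArg Nat.cast (card_coordRank_le hω hk)
    _ = k := by simp

theorem Exchangeable.measure_coordRank_eq (hexch : Exchangeable P Z) (hZ : ∀ i, Measurable (Z i))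
    (p : ℕ → Prop) (j j' : ι) :
    P {ω | p (coordRank (fun i => Z i ω) j)} = P {ω | p (coordRank (fun i => Z i ω) j')} := by
  classical
  have hS : MeasurableSet {v : ι → α | p (coordRank v j')} :=
    measurable_coordRank j' (MeasurableSet.of_discrete (s := {m | p m}))
  have hswap : (fun ω i => Z (Equiv.swap j j' i) ω) ⁻¹' {v | p (coordRank v j')} =
      {ω | p (coordRank (fun i => Z i ω) j)} := by
    ext ω
    simp only [Set.mem_preimage, Set.mem_ofPred_eq]
    rw [← Function.comp_def (fun i => Z i ω), coordRank_comp_perm, Equiv.swap_apply_right]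
  rw [← hswap, hexch.measure_preimage_comp_perm hZ _ hS]
  rfl

theorem Exchangeable.measure_coordRank_le [IsProbabilityMeasure P] (hexch : Exchangeable P Z)
    (hZ : ∀ i, Measurable (Z i)) (hinj : ∀ᵐ ω ∂P, Function.Injective fun i => Z i ω)
    {k : ℕ} (hk : k ≤ Fintype.card ι) (j : ι) :
    P {ω | coordRank (fun i => Z i ω) j ≤ k} = k / Fintype.card ι := by
  have hcard : (Fintype.card ι : ℝ≥0∞) ≠ 0 :=
    Nat.cast_ne_zero.2 (Fintype.card_pos_iff.2 ⟨j⟩).ne'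
  rw [ENNReal.eq_div_iff hcard (ENNReal.natCast_ne_top _), ← sum_measure_coordRank_le hZ hinj hk]
  simp [hexch.measure_coordRank_eq hZ (· ≤ k) _ j]

end

theorem stmt_2_general {Ω : Type*} [MeasurableSpace Ω] (P : Measure Ω) [IsProbabilityMeasure P]
    (n : ℕ) (Z : Fin (n + 1) → Ω → ℝ) (hZ : ∀ i, Measurable (Z i))
    (hexch : Exchangeable P Z)
    (hdist : ∀ i j, i ≠ j → P {ω | Z i ω = Z j ω} = 0)
    (k : ℕ) (hk2 : k ≤ n + 1) :
    (P {ω | (Finset.univ.filter fun i : Fin (n + 1) =>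
        Z i ω ≤ Z (Fin.last n) ω).card ≤ k}).toReal = k / (n + 1) := by
  have hk : k ≤ Fintype.card (Fin (n + 1)) := by simpa using hk2
  have h := hexch.measure_coordRank_le hZ (ae_injective_of_measure_eq_zero hdist) hk (Fin.last n)
  simp only [coordRank, Fintype.card_fin] at h
  rw [h, ENNReal.toReal_div, ENNReal.toReal_natCast, ENNReal.toReal_natCast, Nat.cast_succ]

/-- If Z_1, ..., Z_{n+1} are exchangeable with almost surely distinct values,
then for any k ∈ {1, ..., n+1}, the probability that Z_{n+1} is among the k smallest values
of Z_1, ..., Z_{n+1} is exactly k/(n+1). -/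
theorem stmt_2 {Ω : Type*} [MeasurableSpace Ω] (P : Measure Ω) [IsProbabilityMeasure P]
    (n : ℕ) (Z : Fin (n + 1) → Ω → ℝ) (hZ : ∀ i, Measurable (Z i))
    (hexch : Exchangeable P Z)
    (hdist : ∀ i j, i ≠ j → P {ω | Z i ω = Z j ω} = 0)
    (k : ℕ) (hk1 : 1 ≤ k) (hk2 : k ≤ n + 1) :
    (P {ω | (Finset.univ.filter fun i : Fin (n + 1) =>
        Z i ω ≤ Z (Fin.last n) ω).card ≤ k}).toReal = k / (n + 1) :=
  stmt_2_general P n Z hZ hexch hdist k hk2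
end

section
/- Let (X_i, Y_i), i = 1, ..., n+1 be exchangeable pairs, with a calibration set I_2 ⊆ {1, ..., n} disjoint from the training data used to fit fixed functions μ_l, μ_h : X → ℝ. Define residuals R_i^l = μ_l(X_i) - Y_i and R_i^h = Y_i - μ_h(X_i) for i ∈ I_2, and let Q_{1-α_l} and Q_{1-α_h} be the ⌈(1-α_l)(|I_2|+1)⌉-th and ⌈(1-α_h)(|I_2|+1)⌉-th order statistics of {R_i^l} and {R_i^h} respectively (set to +∞ if the index exceeds |I_2|). Then P(μ_l(X_{n+1}) - Q_{1-α_l} ≤ Y_{n+1} ≤ μ_h(X_{n+1}) + Q_{1-α_h}) ≥ 1 - (α_l + α_h). -/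
open MeasureTheory List
open scoped ENNReal

lemma sorted_getElem_le {s : List ℝ} (hs : List.Pairwise (fun a b : ℝ => a ≤ b) s)
    {i j : ℕ} (hij : i ≤ j) (hj : j < s.length) :
    s[i]'(lt_of_le_of_lt hij hj) ≤ s[j] := by
  rcases lt_or_eq_of_le hij with h | h
  · exact List.pairwise_iff_getElem.mp hs i j _ hj h
  · subst h; exact le_rfl

lemma sorted_msort {l : List ℝ} :
    List.Pairwise (fun a b : ℝ => a ≤ b) (l.mergeSort fun a b => decide (a ≤ b)) := by
  have := List.pairwise_mergeSort (le := fun a b : ℝ => decide (a ≤ b))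
    (fun a b c hab hbc => by simp_all; linarith)
    (fun a b => by simpa using le_total a b) l
  simpa using this

lemma le_countP_of_take {s : List ℝ} {p : ℝ → Bool} {k : ℕ} (hk : k ≤ s.length)
    (h : ∀ j (hj : j < k), p (s[j]'(lt_of_lt_of_le hj hk))) : k ≤ s.countP p := by
  have h1 : (s.take k).countP p = k := by
    rw [List.countP_eq_length.mpr, List.length_take_of_le hk]
    intro a ha
    obtain ⟨j, hj, rfl⟩ := List.mem_iff_getElem.mp ha
    have hjk : j < k := by simpa [List.length_take_of_le hk] using hj
    simpa [List.getElem_take] using h j hjk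
  calc k = (s.take k).countP p := h1.symm
    _ ≤ (s.take k).countP p + (s.drop k).countP p := Nat.le_add_right _ _
    _ = s.countP p := by rw [← List.countP_append, List.take_append_drop]

lemma countP_le_of_drop {s : List ℝ} {p : ℝ → Bool} {n : ℕ}
    (h : ∀ j (hj : n + j < s.length), ¬ p (s[n + j]'hj)) : s.countP p ≤ n := by
  have h0 : (s.drop n).countP p = 0 := by
    rw [List.countP_eq_zero]
    intro a ha
    obtain ⟨j, hj, rfl⟩ := List.mem_iff_getElem.mp ha
    rw [List.getElem_drop]
    have : j < s.length - n := by simpa [List.length_drop] using hj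
    exact h j (by omega)
  calc s.countP p = (s.take n).countP p + (s.drop n).countP p := by
        rw [← List.countP_append, List.take_append_drop]
    _ = (s.take n).countP p := by rw [h0, Nat.add_zero]
    _ ≤ (s.take n).length := List.countP_le_length
    _ ≤ n := by simp [List.length_take]

/-- key equivalence: `x ≤ k`-th order statistic iff fewer than `k` elements are `< x`. -/
lemma le_orderStat_iff {l : List ℝ} {k : ℕ} (hk1 : 1 ≤ k) (hk : k ≤ l.length) (x : ℝ) :
    x ≤ orderStat l k ↔ l.countP (fun a => decide (a < x)) < k := by
  set s := l.mergeSort (fun a b => decide (a ≤ b)) with hs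
  have hlen : s.length = l.length := List.length_mergeSort l
  have hperm : s.Perm l := List.mergeSort_perm l _
  have hcnt : l.countP (fun a => decide (a < x)) = s.countP (fun a => decide (a < x)) :=
    (hperm.countP_eq _).symm
  have hidx : k - 1 < s.length := by omega
  have hget : orderStat l k = s[k-1] := List.getD_eq_getElem s 0 hidx
  rw [hget, hcnt]
  constructor
  · intro hx
    have : s.countP (fun a => decide (a < x)) ≤ k - 1 := by
      apply countP_le_of_drop
      intro j hj
      have hle : s[k-1] ≤ s[k-1+j] := sorted_getElem_le sorted_msort (Nat.le_add_right _ _) hj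
      simp only [decide_eq_true_eq]
      push_neg
      linarith
    omega
  · intro hcount
    by_contra hlt
    push_neg at hlt
    have : k ≤ s.countP (fun a => decide (a < x)) := by
      apply le_countP_of_take (by omega)
      intro j hj
      have hle : s[j]'(by omega) ≤ s[k-1] := sorted_getElem_le sorted_msort (by omega) hidx
      simp only [decide_eq_true_eq]
      linarith
    omega

lemma countP_ofFn_s3 {n : ℕ} (g : Fin n → ℝ) (p : ℝ → Prop) [DecidablePred p] :
    (List.ofFn g).countP (fun a => decide (p a)) = (Finset.univ.filter fun i => p (g i)).card := by
  induction n with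
  | zero => simp
  | succ n ih =>
    rw [List.ofFn_succ, List.countP_cons, ih (fun i => g i.succ), Finset.card_filter,
      Finset.card_filter, Fin.sum_univ_succ]
    simp only [decide_eq_true_eq]
    omega

/-- counting lemma: at least `k` of the `N` values have strict rank `< k`. -/
lemma count_rank_lt {N : ℕ} (r : Fin N → ℝ) {k : ℕ} (hk1 : 1 ≤ k) (hk : k ≤ N) :
    k ≤ (Finset.univ.filter fun j =>
        (Finset.univ.filter fun i => r i < r j).card < k).card := by
  set l := List.ofFn r with hl
  have hlen : l.length = N := by simp [hl]
  set v := orderStat l k with hv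
  have hiff : ∀ j : Fin N, ((Finset.univ.filter fun i => r i < r j).card < k) ↔ r j ≤ v := by
    intro j
    rw [← countP_ofFn_s3 r (fun a => a < r j)]
    exact (le_orderStat_iff hk1 (show k ≤ l.length by omega) (r j)).symm
  have hfe : (Finset.univ.filter fun j =>
      (Finset.univ.filter fun i => r i < r j).card < k) =
      (Finset.univ.filter fun j => r j ≤ v) := by
    apply Finset.filter_congr
    intro j _
    simpa using hiff j
  rw [hfe, ← countP_ofFn_s3 r (fun a => a ≤ v), ← hl]
  -- k ≤ countP (· ≤ v) l
  set s := l.mergeSort (fun a b => decide (a ≤ b)) with hs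
  have hslen : s.length = N := by rw [List.length_mergeSort]; exact hlen
  have hidx : k - 1 < s.length := by omega
  have hgv : v = s[k-1] := List.getD_eq_getElem s 0 hidx
  rw [← (List.mergeSort_perm l _).countP_eq]
  apply le_countP_of_take (show k ≤ s.length by omega)
  intro j hj
  have : s[j]'(by omega) ≤ s[k-1] := sorted_getElem_le sorted_msort (by omega) hidx
  simp only [decide_eq_true_eq]
  rw [hgv]
  exact this

lemma card_filter_perm {N : ℕ} (σ : Equiv.Perm (Fin N)) (q : Fin N → Prop) [DecidablePred q] :
    (Finset.univ.filter fun i => q (σ i)).card = (Finset.univ.filter q).card := by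
  apply Finset.card_bij' (fun i _ => σ i) (fun i _ => σ.symm i) <;> simp

lemma exch_comp {Ω 𝒳 : Type*} [MeasurableSpace Ω] [MeasurableSpace 𝒳] {N : ℕ}
    (P : Measure Ω) (Z : Fin N → Ω → 𝒳 × ℝ) (hZ : ∀ i, Measurable (Z i))
    (h : Exchangeable P Z) (g : 𝒳 × ℝ → ℝ) (hg : Measurable g) :
    Exchangeable P (fun i ω => g (Z i ω)) := by
  intro σ
  have hmap : Measurable (fun z : Fin N → 𝒳 × ℝ => fun i => g (z i)) :=
    measurable_pi_lambda _ (fun i => hg.comp (measurable_pi_apply i))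
  have h1 : (fun ω i => g (Z (σ i) ω)) =
      (fun z : Fin N → 𝒳 × ℝ => fun i => g (z i)) ∘ (fun ω i => Z (σ i) ω) := rfl
  have h2 : (fun ω i => g (Z i ω)) =
      (fun z : Fin N → 𝒳 × ℝ => fun i => g (z i)) ∘ (fun ω i => Z i ω) := rfl
  rw [h1, h2, ← Measure.map_map hmap (measurable_pi_lambda _ fun i => hZ (σ i)),
    ← Measure.map_map hmap (measurable_pi_lambda _ hZ), h σ]

lemma core {Ω : Type*} [MeasurableSpace Ω] (P : Measure Ω) [IsProbabilityMeasure P]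
    {m k : ℕ} (W : Fin (m+1) → Ω → ℝ) (hW : ∀ i, Measurable (W i))
    (hexch : Exchangeable P W) (hk1 : 1 ≤ k) (hk : k ≤ m + 1) :
    ((k : ℝ≥0∞) / (m+1)) ≤ P {ω | (Finset.univ.filter
      fun i => W i ω < W (Fin.last m) ω).card < k} := by
  -- the canonical measurable count sets on the path space
  have hcmeas : ∀ j : Fin (m+1), Measurable (fun z : Fin (m+1) → ℝ =>
      (Finset.univ.filter fun i => z i < z j).card) := by
    intro j
    simp only [Finset.card_filter]
    exact Finset.measurable_sum _ fun i _ =>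
      Measurable.ite (measurableSet_lt (measurable_pi_apply i) (measurable_pi_apply j))
        measurable_const measurable_const
  set A : Fin (m+1) → Set (Fin (m+1) → ℝ) := fun j =>
    {z | (Finset.univ.filter fun i => z i < z j).card < k} with hA
  have hAmeas : ∀ j, MeasurableSet (A j) := fun j =>
    (hcmeas j) (measurableSet_Iio (a := k))
  set E : Fin (m+1) → Set Ω := fun j =>
    {ω | (Finset.univ.filter fun i => W i ω < W j ω).card < k} with hE
  have hφ : Measurable (fun ω i => W i ω) := measurable_pi_lambda _ hW
  have hEpre : ∀ j, E j = (fun ω i => W i ω) ⁻¹' (A j) := fun j => rfl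
  have hEmeas : ∀ j, MeasurableSet (E j) := fun j => (hEpre j) ▸ hφ (hAmeas j)
  -- all E j have the same probability as E (last)
  have hsame : ∀ j : Fin (m+1), P (E j) = P (E (Fin.last m)) := by
    intro j
    set σ : Equiv.Perm (Fin (m+1)) := Equiv.swap j (Fin.last m) with hσ
    have hφσ : Measurable (fun ω i => W (σ i) ω) :=
      measurable_pi_lambda _ fun i => hW (σ i)
    have hpre : (fun ω i => W (σ i) ω) ⁻¹' (A (Fin.last m)) = E j := by
      ext ω
      simp only [Set.mem_preimage, hA, Set.mem_setOf_eq, hE]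
      rw [card_filter_perm σ (fun i => W i ω < W (σ (Fin.last m)) ω), hσ,
        Equiv.swap_apply_right]
    calc P (E j) = Measure.map (fun ω i => W (σ i) ω) P (A (Fin.last m)) := by
          rw [Measure.map_apply hφσ (hAmeas _), hpre]
      _ = Measure.map (fun ω i => W i ω) P (A (Fin.last m)) := by rw [hexch σ]
      _ = P (E (Fin.last m)) := by
          rw [Measure.map_apply hφ (hAmeas _), ← hEpre]
  -- sum of the indicator functions is ≥ k pointwise
  have hpoint : ∀ ω, (k : ℝ≥0∞) ≤ ∑ j : Fin (m+1), (E j).indicator 1 ω := by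
    intro ω
    have : ∑ j : Fin (m+1), (E j).indicator (1 : Ω → ℝ≥0∞) ω =
        ((Finset.univ.filter fun j : Fin (m+1) => ω ∈ E j).card : ℝ≥0∞) := by
      rw [Finset.card_filter, Nat.cast_sum]
      refine Finset.sum_congr rfl fun j _ => ?_
      by_cases h : ω ∈ E j <;> simp [Set.indicator_apply, h]
    rw [this]
    have := count_rank_lt (fun i => W i ω) hk1 hk
    exact_mod_cast this
  -- conclude
  have hsum : (k : ℝ≥0∞) ≤ ∑ j : Fin (m+1), P (E j) := by
    calc (k : ℝ≥0∞) = ∫⁻ _, (k : ℝ≥0∞) ∂P := by simp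
      _ ≤ ∫⁻ ω, ∑ j : Fin (m+1), (E j).indicator 1 ω ∂P := lintegral_mono hpoint
      _ = ∑ j : Fin (m+1), ∫⁻ ω, (E j).indicator 1 ω ∂P := by
          exact lintegral_finset_sum _ fun j _ =>
            (measurable_one.indicator (hEmeas j))
      _ = ∑ j : Fin (m+1), P (E j) := by
          exact Finset.sum_congr rfl fun j _ => lintegral_indicator_one (hEmeas j)
  have hconst : ∑ j : Fin (m+1), P (E j) = ((m+1 : ℕ) : ℝ≥0∞) * P (E (Fin.last m)) := by
    rw [Finset.sum_congr rfl fun j _ => hsame j, Finset.sum_const, Finset.card_univ,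
      Fintype.card_fin, nsmul_eq_mul]
  rw [hconst] at hsum
  have : (k : ℝ≥0∞) / ((m+1 : ℕ) : ℝ≥0∞) ≤ P (E (Fin.last m)) := by
    rw [ENNReal.div_le_iff_le_mul (Or.inl (by simp)) (Or.inl (by simp))]
    rw [mul_comm]
    exact hsum
  have hcast : ((m+1 : ℕ) : ℝ≥0∞) = (m : ℝ≥0∞) + 1 := by push_cast; ring
  rw [hcast] at this
  exact this

lemma side {Ω : Type*} [MeasurableSpace Ω] (P : Measure Ω) [IsProbabilityMeasure P]
    {m : ℕ} (W : Fin (m+1) → Ω → ℝ) (hW : ∀ i, Measurable (W i))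
    (hexch : Exchangeable P W) {α : ℝ} (h0 : 0 < α) (h1 : α < 1) {k : ℕ}
    (hkdef : k = ⌈(1-α)*(m+1)⌉₊) :
    MeasurableSet {ω | m < k ∨ W (Fin.last m) ω ≤
        orderStat (List.ofFn fun i : Fin m => W i.castSucc ω) k} ∧
      1 - α ≤ (P {ω | m < k ∨ W (Fin.last m) ω ≤
        orderStat (List.ofFn fun i : Fin m => W i.castSucc ω) k}).toReal := by
  have hk1 : 1 ≤ k := by
    rw [hkdef]
    exact Nat.one_le_iff_ne_zero.mpr (by
      simp only [ne_eq, Nat.ceil_eq_zero, not_le]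
      have hm1 : (0:ℝ) < (m:ℝ) + 1 := by positivity
      nlinarith)
  have hkle : k ≤ m + 1 := by
    rw [hkdef]
    apply Nat.ceil_le.mpr
    push_cast
    nlinarith
  by_cases hm : m < k
  · have hset : {ω : Ω | m < k ∨ W (Fin.last m) ω ≤
        orderStat (List.ofFn fun i : Fin m => W i.castSucc ω) k} = Set.univ := by
      ext ω; simp [hm]
    rw [hset]
    refine ⟨MeasurableSet.univ, ?_⟩
    simp only [measure_univ, ENNReal.toReal_one]
    linarith
  · have hkm : k ≤ m := by omega
    have hset : {ω : Ω | m < k ∨ W (Fin.last m) ω ≤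
        orderStat (List.ofFn fun i : Fin m => W i.castSucc ω) k} =
        {ω | (Finset.univ.filter fun i => W i ω < W (Fin.last m) ω).card < k} := by
      ext ω
      simp only [Set.mem_setOf_eq, hm, false_or]
      rw [le_orderStat_iff hk1 (by simp [hkm]) (W (Fin.last m) ω),
        countP_ofFn_s3 (fun i : Fin m => W i.castSucc ω) (fun a => a < W (Fin.last m) ω)]
      have hcard : (Finset.univ.filter fun i : Fin (m+1) =>
          W i ω < W (Fin.last m) ω).card =
          (Finset.univ.filter fun i : Fin m =>
          W i.castSucc ω < W (Fin.last m) ω).card := by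
        rw [Finset.card_filter, Finset.card_filter, Fin.sum_univ_castSucc]
        simp [lt_irrefl]
      rw [hcard]
    rw [hset]
    have hmeas : MeasurableSet {ω | (Finset.univ.filter
        fun i => W i ω < W (Fin.last m) ω).card < k} := by
      have hc : Measurable (fun ω => (Finset.univ.filter
          fun i : Fin (m+1) => W i ω < W (Fin.last m) ω).card) := by
        simp only [Finset.card_filter]
        exact Finset.measurable_sum _ fun i _ =>
          Measurable.ite (measurableSet_lt (hW i) (hW (Fin.last m)))
            measurable_const measurable_const
      exact hc (measurableSet_Iio (a := k))
    refine ⟨hmeas, ?_⟩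
    have hcore := core P W hW hexch hk1 hkle
    have hfin : ((k : ℝ≥0∞) / ((m : ℝ≥0∞)+1)) ≠ ⊤ :=
      (ENNReal.div_lt_top (by simp) (by simp)).ne
    have htr : ((k : ℝ≥0∞) / ((m : ℝ≥0∞)+1)).toReal ≤ (P {ω | (Finset.univ.filter
        fun i => W i ω < W (Fin.last m) ω).card < k}).toReal :=
      ENNReal.toReal_mono (measure_ne_top _ _) hcore
    have hval : ((k : ℝ≥0∞) / ((m : ℝ≥0∞)+1)).toReal = (k : ℝ) / (m+1) := by
      rw [ENNReal.toReal_div, ENNReal.toReal_add (by simp) (by simp)]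
      simp
    have hreal : 1 - α ≤ (k : ℝ) / (m+1) := by
      rw [le_div_iff₀ (by positivity)]
      calc (1-α) * (m+1) ≤ (⌈(1-α)*(m+1)⌉₊ : ℝ) := Nat.le_ceil _
        _ = (k : ℝ) := by rw [hkdef]
    linarith [hval ▸ htr]

/-- CQR marginal coverage.  The calibration pairs (indices `i.castSucc`,
`i : Fin m`, where `m = |I_2|`) together with the test pair (index `Fin.last m`) are
exchangeable; `μl, μh` are fixed fitted functions.  With the calibrated quantiles
`Q_{1-αl}`, `Q_{1-αh}` of the lower/upper residuals (set to +∞, i.e. the corresponding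
one-sided event always holds, if the order-statistic index exceeds m), the CQR interval
covers Y_{n+1} with probability at least 1 - (αl + αh). -/
theorem stmt_3 {Ω 𝒳 : Type*} [MeasurableSpace Ω] [MeasurableSpace 𝒳]
    (P : Measure Ω) [IsProbabilityMeasure P]
    (m : ℕ) (X : Fin (m + 1) → Ω → 𝒳) (Y : Fin (m + 1) → Ω → ℝ)
    (hX : ∀ i, Measurable (X i)) (hY : ∀ i, Measurable (Y i))
    (hexch : Exchangeable P (fun i ω => (X i ω, Y i ω)))
    (μl μh : 𝒳 → ℝ) (hμl : Measurable μl) (hμh : Measurable μh)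
    (αl αh : ℝ) (hαl : αl ∈ Set.Ioo (0:ℝ) 1) (hαh : αh ∈ Set.Ioo (0:ℝ) 1)
    (hα : αl + αh < 1) :
    1 - (αl + αh) ≤ (P {ω |
      (m < ⌈(1 - αl) * (m + 1)⌉₊ ∨
        μl (X (Fin.last m) ω) -
          orderStat (List.ofFn fun i : Fin m => μl (X i.castSucc ω) - Y i.castSucc ω)
            ⌈(1 - αl) * (m + 1)⌉₊ ≤ Y (Fin.last m) ω) ∧
      (m < ⌈(1 - αh) * (m + 1)⌉₊ ∨
        Y (Fin.last m) ω ≤ μh (X (Fin.last m) ω) +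
          orderStat (List.ofFn fun i : Fin m => Y i.castSucc ω - μh (X i.castSucc ω))
            ⌈(1 - αh) * (m + 1)⌉₊)}).toReal := by
  set Wl : Fin (m+1) → Ω → ℝ := fun i ω => μl (X i ω) - Y i ω with hWl
  set Wh : Fin (m+1) → Ω → ℝ := fun i ω => Y i ω - μh (X i ω) with hWh
  have hZ : ∀ i, Measurable (fun ω => (X i ω, Y i ω)) := fun i => (hX i).prodMk (hY i)
  have hWlm : ∀ i, Measurable (Wl i) := fun i => (hμl.comp (hX i)).sub (hY i)
  have hWhm : ∀ i, Measurable (Wh i) := fun i => (hY i).sub (hμh.comp (hX i))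
  have hexl : Exchangeable P Wl :=
    exch_comp P _ hZ hexch (fun p => μl p.1 - p.2)
      ((hμl.comp measurable_fst).sub measurable_snd)
  have hexh : Exchangeable P Wh :=
    exch_comp P _ hZ hexch (fun p => p.2 - μh p.1)
      (measurable_snd.sub (hμh.comp measurable_fst))
  obtain ⟨hSlm, hSl⟩ := side P Wl hWlm hexl hαl.1 hαl.2 (k := ⌈(1-αl)*(m+1)⌉₊) rfl
  obtain ⟨hShm, hSh⟩ := side P Wh hWhm hexh hαh.1 hαh.2 (k := ⌈(1-αh)*(m+1)⌉₊) rfl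
  set Sl := {ω | m < ⌈(1-αl)*(m+1)⌉₊ ∨ Wl (Fin.last m) ω ≤
      orderStat (List.ofFn fun i : Fin m => Wl i.castSucc ω) ⌈(1-αl)*(m+1)⌉₊} with hSldef
  set Sh := {ω | m < ⌈(1-αh)*(m+1)⌉₊ ∨ Wh (Fin.last m) ω ≤
      orderStat (List.ofFn fun i : Fin m => Wh i.castSucc ω) ⌈(1-αh)*(m+1)⌉₊} with hShdef
  have hset : {ω |
      (m < ⌈(1 - αl) * (m + 1)⌉₊ ∨
        μl (X (Fin.last m) ω) -
          orderStat (List.ofFn fun i : Fin m => μl (X i.castSucc ω) - Y i.castSucc ω)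
            ⌈(1 - αl) * (m + 1)⌉₊ ≤ Y (Fin.last m) ω) ∧
      (m < ⌈(1 - αh) * (m + 1)⌉₊ ∨
        Y (Fin.last m) ω ≤ μh (X (Fin.last m) ω) +
          orderStat (List.ofFn fun i : Fin m => Y i.castSucc ω - μh (X i.castSucc ω))
            ⌈(1 - αh) * (m + 1)⌉₊)} = Sl ∩ Sh := by
    ext ω
    simp only [hSldef, hShdef, Set.mem_inter_iff, Set.mem_setOf_eq, hWl, hWh]
    constructor
    · rintro ⟨hl, hh⟩
      exact ⟨hl.imp id (fun h => by linarith),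
        hh.imp id (fun h => by linarith)⟩
    · rintro ⟨hl, hh⟩
      exact ⟨hl.imp id (fun h => by linarith),
        hh.imp id (fun h => by linarith)⟩
  rw [hset]
  have hcompl : P ((Sl ∩ Sh)ᶜ) ≤ P Slᶜ + P Shᶜ := by
    rw [Set.compl_inter]
    exact measure_union_le _ _
  have hlc : (P Slᶜ).toReal = 1 - (P Sl).toReal := by
    rw [measure_compl hSlm (measure_ne_top _ _), measure_univ,
      ENNReal.toReal_sub_of_le prob_le_one (by simp)]
    simp
  have hhc : (P Shᶜ).toReal = 1 - (P Sh).toReal := by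
    rw [measure_compl hShm (measure_ne_top _ _), measure_univ,
      ENNReal.toReal_sub_of_le prob_le_one (by simp)]
    simp
  have hic : (P ((Sl ∩ Sh)ᶜ)).toReal = 1 - (P (Sl ∩ Sh)).toReal := by
    rw [measure_compl (hSlm.inter hShm) (measure_ne_top _ _), measure_univ,
      ENNReal.toReal_sub_of_le prob_le_one (by simp)]
    simp
  have hctr : (P ((Sl ∩ Sh)ᶜ)).toReal ≤ (P Slᶜ).toReal + (P Shᶜ).toReal := by
    calc (P ((Sl ∩ Sh)ᶜ)).toReal ≤ (P Slᶜ + P Shᶜ).toReal :=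
        ENNReal.toReal_mono (by simp [ENNReal.add_ne_top, measure_ne_top]) hcompl
      _ = (P Slᶜ).toReal + (P Shᶜ).toReal :=
        ENNReal.toReal_add (measure_ne_top _ _) (measure_ne_top _ _)
  linarith
end

section
/- Let Z_1, ..., Z_{n+1} be i.i.d. real random variables (hence exchangeable). Define the conformal p-value p = (1 + #{i ≤ n : Z_i ≥ Z_{n+1}})/(n+1). Then for any α ∈ (0,1), P(p ≤ α) ≤ α, i.e., p is super-uniform. -/
open MeasureTheory

open MeasureTheory Finset
open scoped ENNReal

/-- rank of coordinate j among all coordinates (counting itself). -/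
noncomputable def rankFn {n : ℕ} (z : Fin (n + 1) → ℝ) (j : Fin (n + 1)) : ℕ :=
  (Finset.univ.filter fun i => z j ≤ z i).card

lemma card_rank_le {n : ℕ} (z : Fin (n + 1) → ℝ) (k : ℕ) :
    (Finset.univ.filter fun j => rankFn z j ≤ k).card ≤ k := by
  set S := Finset.univ.filter fun j => rankFn z j ≤ k with hS
  rcases S.eq_empty_or_nonempty with h | h
  · simp [h]
  · obtain ⟨j0, hj0, hmin⟩ := S.exists_min_image z h
    have hsub : S ⊆ Finset.univ.filter fun i => z j0 ≤ z i := by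
      intro i hi
      simp only [Finset.mem_filter, Finset.mem_univ, true_and]
      exact hmin i hi
    calc S.card ≤ (Finset.univ.filter fun i => z j0 ≤ z i).card := Finset.card_le_card hsub
      _ = rankFn z j0 := rfl
      _ ≤ k := by simpa [hS] using (Finset.mem_filter.mp hj0).2

lemma rankFn_comp_perm {n : ℕ} (z : Fin (n + 1) → ℝ) (σ : Equiv.Perm (Fin (n + 1)))
    (j : Fin (n + 1)) : rankFn (z ∘ σ) j = rankFn z (σ j) := by
  unfold rankFn
  have h : (Finset.univ.filter fun i => z (σ j) ≤ z i)
      = (Finset.univ.filter fun i => z (σ j) ≤ z (σ i)).map σ.toEmbedding := by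
    ext i
    simp only [Finset.mem_map, Finset.mem_filter, Finset.mem_univ, true_and,
      Equiv.coe_toEmbedding]
    constructor
    · intro hh; exact ⟨σ.symm i, by simpa using hh, by simp⟩
    · rintro ⟨a, ha, rfl⟩; exact ha
  calc (Finset.univ.filter fun i => (z ∘ σ) j ≤ (z ∘ σ) i).card
      = (Finset.univ.filter fun i => z (σ j) ≤ z (σ i)).card := rfl
    _ = (Finset.univ.filter fun i => z (σ j) ≤ z i).card := by rw [h, Finset.card_map]

lemma measurable_rankFn {n : ℕ} (j : Fin (n + 1)) :
    Measurable fun z : Fin (n + 1) → ℝ => rankFn z j := by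
  have h : (fun z : Fin (n + 1) → ℝ => rankFn z j)
      = fun z => ∑ i : Fin (n + 1), if z j ≤ z i then 1 else 0 := by
    funext z; rw [rankFn, Finset.card_filter]
  rw [h]
  refine Finset.measurable_sum _ (fun i _ => ?_)
  exact Measurable.ite (measurableSet_le (measurable_pi_apply j) (measurable_pi_apply i))
    measurable_const measurable_const

lemma rankFn_last {n : ℕ} (z : Fin (n + 1) → ℝ) :
    rankFn z (Fin.last n)
      = 1 + (Finset.univ.filter fun i : Fin n => z (Fin.last n) ≤ z i.castSucc).card := by
  unfold rankFn
  rw [Fin.univ_castSuccEmb, Finset.filter_cons, if_pos le_rfl, Finset.card_cons,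
    Finset.filter_map, Finset.card_map]
  rw [add_comm]
  rfl

lemma joint_law {Ω : Type*} [MeasurableSpace Ω] (P : Measure Ω) [IsProbabilityMeasure P]
    {n : ℕ} (Z : Fin (n + 1) → Ω → ℝ) (hZ : ∀ i, Measurable (Z i))
    (hindep : ProbabilityTheory.iIndepFun Z P)
    (hident : ∀ i j, Measure.map (Z i) P = Measure.map (Z j) P) :
    Measure.map (fun ω i => Z i ω) P = Measure.pi (fun _ => Measure.map (Z 0) P) := by
  have hprob : ∀ i : Fin (n+1), IsProbabilityMeasure (Measure.map (Z i) P) :=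
    fun i => Measure.isProbabilityMeasure_map (hZ i).aemeasurable
  refine (Measure.pi_eq fun s hs => ?_).symm
  rw [Measure.map_apply (measurable_pi_lambda _ fun i => hZ i) (MeasurableSet.univ_pi hs)]
  have hpre : (fun ω i => Z i ω) ⁻¹' (Set.pi Set.univ s) = ⋂ i ∈ Finset.univ, Z i ⁻¹' s i := by
    ext ω; simp [Set.mem_pi]
  rw [hpre, hindep.measure_inter_preimage_eq_mul Finset.univ (fun i _ => hs i)]
  refine Finset.prod_congr rfl fun i _ => ?_
  rw [← Measure.map_apply (hZ i) (hs i), hident i 0]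

lemma pi_perm_invariant {n : ℕ} (μ : Measure ℝ) [IsProbabilityMeasure μ]
    (σ : Equiv.Perm (Fin (n+1))) (B : Set (Fin (n+1) → ℝ)) (hB : MeasurableSet B) :
    Measure.pi (fun _ : Fin (n+1) => μ) ((fun z => z ∘ σ.symm) ⁻¹' B)
      = Measure.pi (fun _ : Fin (n+1) => μ) B := by
  have h := MeasureTheory.measurePreserving_piCongrLeft (fun _ : Fin (n+1) => μ) σ
  have heq : ⇑(MeasurableEquiv.piCongrLeft (fun _ : Fin (n+1) => ℝ) σ)
      = fun z => z ∘ σ.symm := by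
    funext z; funext i
    simp [MeasurableEquiv.piCongrLeft, Equiv.piCongrLeft, Equiv.piCongrLeft']
  rw [← heq]
  exact h.measure_preimage hB.nullMeasurableSet

open MeasureTheory


/-- super-uniformity of the conformal p-value.  For i.i.d.
Z_1, ..., Z_{n+1}, the conformal p-value p = (1 + #{i ≤ n : Z_i ≥ Z_{n+1}})/(n+1)
satisfies P(p ≤ α) ≤ α for every α ∈ (0,1). -/
theorem stmt_15 {Ω : Type*} [MeasurableSpace Ω] (P : Measure Ω) [IsProbabilityMeasure P]
    (n : ℕ) (Z : Fin (n + 1) → Ω → ℝ) (hZ : ∀ i, Measurable (Z i))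
    (hindep : ProbabilityTheory.iIndepFun Z P)
    (hident : ∀ i j, Measure.map (Z i) P = Measure.map (Z j) P)
    (α : ℝ) (hα : α ∈ Set.Ioo (0:ℝ) 1) :
    (P {ω | (1 + ((Finset.univ.filter fun i : Fin n =>
        Z (Fin.last n) ω ≤ Z i.castSucc ω).card : ℝ)) / (n + 1) ≤ α}).toReal ≤ α := by
  obtain ⟨hα0, hα1⟩ := hα
  set μ : Measure ℝ := Measure.map (Z 0) P with hμ
  haveI : IsProbabilityMeasure μ := Measure.isProbabilityMeasure_map (hZ 0).aemeasurable
  set ν : Measure (Fin (n+1) → ℝ) := Measure.pi (fun _ => μ) with hν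
  haveI : IsProbabilityMeasure ν := MeasureTheory.Measure.pi.instIsProbabilityMeasure _
  set k : ℕ := ⌊α * (n + 1)⌋₊ with hk
  set B : Fin (n+1) → Set (Fin (n+1) → ℝ) := fun j => {z | rankFn z j ≤ k} with hB
  have hBmeas : ∀ j, MeasurableSet (B j) := fun j =>
    (measurable_rankFn j) ((Set.to_countable {m : ℕ | m ≤ k}).measurableSet)
  set T : Ω → Fin (n+1) → ℝ := fun ω i => Z i ω with hT
  have hTmeas : Measurable T := measurable_pi_lambda _ fun i => hZ i
  have hjoint : Measure.map T P = ν := joint_law P Z hZ hindep hident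
  -- all B j have the same measure
  have hsame : ∀ j, ν (B j) = ν (B (Fin.last n)) := by
    intro j
    have := pi_perm_invariant (n := n) μ (Equiv.swap j (Fin.last n)) (B (Fin.last n))
      (hBmeas _)
    rw [← this]
    congr 1
    ext z
    simp only [hB, Set.mem_preimage, Set.mem_setOf_eq]
    rw [rankFn_comp_perm z (Equiv.swap j (Fin.last n)).symm (Fin.last n)]
    simp
  -- sum of measures is at most k
  have hsum : ∑ j : Fin (n+1), ν (B j) ≤ (k : ℝ≥0∞) := by
    have h1 : ∀ j, ν (B j) = ∫⁻ z, (B j).indicator (fun _ => (1:ℝ≥0∞)) z ∂ν := by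
      intro j
      exact (lintegral_indicator_one (hBmeas j)).symm
    calc ∑ j : Fin (n+1), ν (B j)
        = ∑ j : Fin (n+1), ∫⁻ z, (B j).indicator (fun _ => (1:ℝ≥0∞)) z ∂ν := by
          exact Finset.sum_congr rfl fun j _ => h1 j
      _ = ∫⁻ z, ∑ j : Fin (n+1), (B j).indicator (fun _ => (1:ℝ≥0∞)) z ∂ν := by
          rw [lintegral_finset_sum]
          exact fun j _ => measurable_const.indicator (hBmeas j)
      _ ≤ ∫⁻ _, (k : ℝ≥0∞) ∂ν := by
          refine lintegral_mono fun z => ?_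
          have : ∑ j : Fin (n+1), (B j).indicator (fun _ => (1:ℝ≥0∞)) z
              = ((Finset.univ.filter fun j : Fin (n+1) => rankFn z j ≤ k).card : ℝ≥0∞) := by
            simp only [Set.indicator_apply, hB, Set.mem_setOf_eq]
            rw [Finset.sum_boole]
          rw [this]
          exact (Nat.cast_le (α := ℝ≥0∞)).mpr (card_rank_le z k)
      _ = (k : ℝ≥0∞) := by simp
  -- hence ν (B last) ≤ k/(n+1)
  have hcard : ∑ j : Fin (n+1), ν (B j) = (n + 1 : ℝ≥0∞) * ν (B (Fin.last n)) := by
    rw [Finset.sum_congr rfl fun j _ => hsame j, Finset.sum_const, Finset.card_univ,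
      Fintype.card_fin]
    simp [nsmul_eq_mul]
  have hbound : ν (B (Fin.last n)) ≤ (k : ℝ≥0∞) / (n + 1 : ℝ≥0∞) := by
    have hden : ((n:ℝ≥0∞) + 1) ≠ 0 := (lt_of_lt_of_le zero_lt_one le_add_self).ne'
    rw [ENNReal.le_div_iff_mul_le (Or.inl hden) (Or.inl (by simp))]
    rw [mul_comm]
    rw [hcard] at hsum
    exact hsum
  -- the event equals T ⁻¹' B last
  have hevent : {ω | (1 + ((Finset.univ.filter fun i : Fin n =>
      Z (Fin.last n) ω ≤ Z i.castSucc ω).card : ℝ)) / (n + 1) ≤ α} = T ⁻¹' B (Fin.last n) := by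
    ext ω
    simp only [Set.mem_setOf_eq, Set.mem_preimage, hB]
    have hr : rankFn (T ω) (Fin.last n)
        = 1 + (Finset.univ.filter fun i : Fin n =>
            Z (Fin.last n) ω ≤ Z i.castSucc ω).card := rankFn_last _
    have hnp : (0:ℝ) < (n:ℝ) + 1 := by positivity
    rw [div_le_iff₀ hnp, hk]
    rw [Nat.le_floor_iff (by positivity)]
    rw [hr]
    push_cast
    constructor <;> intro h <;> linarith
  rw [hevent, ← Measure.map_apply hTmeas (hBmeas _), hjoint]
  have hfinal : ((k : ℝ≥0∞) / (n + 1 : ℝ≥0∞)).toReal ≤ α := by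
    have hdiv : ((k : ℝ≥0∞) / (n + 1 : ℝ≥0∞)).toReal = (k:ℝ) / ((n:ℝ) + 1) := by
      rw [ENNReal.toReal_div, ENNReal.toReal_natCast, ENNReal.toReal_add (by simp) (by simp)]
      simp
    rw [hdiv, div_le_iff₀ (by positivity)]
    calc (k:ℝ) ≤ α * (n+1) := Nat.floor_le (by positivity)
      _ = α * ((n:ℝ)+1) := by push_cast; ring
  refine le_trans ?_ hfinal
  exact ENNReal.toReal_mono
    (ENNReal.div_lt_top (by simp) ((lt_of_lt_of_le zero_lt_one le_add_self).ne' :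
      ((n:ℝ≥0∞) + 1) ≠ 0)).ne hbound
end

section
/- Let σ be a uniformly random permutation of {1, ..., n+1} and Z_1, ..., Z_{n+1} arbitrary distinct reals. Then for any k ≤ n+1, P(Z_{σ(n+1)} ≤ k-th smallest of {Z_{σ(1)}, ..., Z_{σ(n)}}) = k/(n+1) if k ≤ n. -/
open scoped Classical

open Finset in
/-- `x ≤ (k+1)-th smallest of A` iff at most `k` elements of `A` are `< x`. -/
lemma kth_le_iff {n k : ℕ} (A : Finset ℝ) (hA : A.card = n) (hk : k < n) (x : ℝ) :
    x ≤ A.orderEmbOfFin hA ⟨k, hk⟩ ↔ (A.filter (fun a => a < x)).card ≤ k := by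
  set f := A.orderEmbOfFin hA with hf
  have himg : Finset.image f Finset.univ = A := by
    ext a
    simp only [Finset.mem_image, Finset.mem_univ, true_and]
    rw [← Finset.mem_coe, ← Finset.range_orderEmbOfFin A hA]
    exact ⟨fun ⟨i, hi⟩ => ⟨i, hi⟩, fun ⟨i, hi⟩ => ⟨i, hi⟩⟩
  have hcard : (A.filter (fun a => a < x)).card
      = (Finset.univ.filter (fun i : Fin n => f i < x)).card := by
    rw [← himg, Finset.filter_image, Finset.card_image_of_injective _ f.injective]
  constructor
  · intro h
    rw [hcard]
    have hsub : (Finset.univ.filter (fun i : Fin n => f i < x)) ⊆ Finset.Iio ⟨k, hk⟩ := by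
      intro i hi
      simp only [Finset.mem_filter] at hi
      rw [Finset.mem_Iio, ← f.lt_iff_lt]
      exact lt_of_lt_of_le hi.2 h
    calc _ ≤ (Finset.Iio (⟨k, hk⟩ : Fin n)).card := Finset.card_le_card hsub
      _ = k := Fin.card_Iio _
  · intro h
    by_contra hlt
    push_neg at hlt
    have hsub : Finset.Iic (⟨k, hk⟩ : Fin n) ⊆
        (Finset.univ.filter (fun i : Fin n => f i < x)) := by
      intro i hi
      rw [Finset.mem_Iic] at hi
      simp only [Finset.mem_filter, Finset.mem_univ, true_and]
      exact lt_of_le_of_lt (f.monotone hi) hlt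
    have := Finset.card_le_card hsub
    rw [Fin.card_Iic] at this
    simp only [← hcard] at this
    omega

lemma count_subtype_perm {n : ℕ} (p : Fin (n + 1) → Prop) (x : Fin (n + 1)) :
    (Finset.univ.filter fun σ : Equiv.Perm (Fin (n + 1)) => p (σ x)).card
      = (Finset.univ.filter p).card * Nat.factorial n := by
  classical
  -- first move x to 0
  have step1 : (Finset.univ.filter fun σ : Equiv.Perm (Fin (n + 1)) => p (σ x)).card
      = (Finset.univ.filter fun σ : Equiv.Perm (Fin (n + 1)) => p (σ 0)).card := by
    refine Finset.card_equiv (Equiv.mulRight (Equiv.swap 0 x)) ?_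
    intro σ
    simp only [Finset.mem_filter, Finset.mem_univ, true_and, Equiv.coe_mulRight,
      Equiv.Perm.mul_apply, Equiv.swap_apply_left]
  rw [step1]
  have h2 : (Finset.univ.filter fun σ : Equiv.Perm (Fin (n + 1)) => p (σ 0)).card
      = Fintype.card {σ : Equiv.Perm (Fin (n + 1)) // p (σ 0)} := by
    rw [Fintype.card_subtype]
  rw [h2]
  have e1 : {σ : Equiv.Perm (Fin (n + 1)) // p (σ 0)} ≃
      {pq : Fin (n + 1) × Equiv.Perm (Fin n) // p pq.1} := by
    refine Equiv.subtypeEquiv Equiv.Perm.decomposeFin (fun σ => ?_)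
    have : σ 0 = (Equiv.Perm.decomposeFin σ).1 := by
      conv_lhs => rw [← Equiv.Perm.decomposeFin.symm_apply_apply σ]
      rw [← Equiv.Perm.decomposeFin_symm_apply_zero (Equiv.Perm.decomposeFin σ).1
        (Equiv.Perm.decomposeFin σ).2]
    rw [this]
  rw [Fintype.card_congr (e1.trans Equiv.prodSubtypeFstEquivSubtypeProd)]
  rw [Fintype.card_prod, Fintype.card_subtype, Fintype.card_perm, Fintype.card_fin]

/-- The rank function `j ↦ #{i : Z i ≤ Z j}` is injective. -/
lemma rank_injective {n : ℕ} (Z : Fin (n + 1) → ℝ) (hZ : Function.Injective Z) :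
    Function.Injective (fun j => (Finset.univ.filter fun i => Z i ≤ Z j).card) := by
  classical
  have key : ∀ j1 j2 : Fin (n + 1),
      (Finset.univ.filter fun i => Z i ≤ Z j1).card
        = (Finset.univ.filter fun i => Z i ≤ Z j2).card → Z j1 ≤ Z j2 := by
    intro j1 j2 h
    by_contra hlt
    push_neg at hlt
    have hsub : (Finset.univ.filter fun i => Z i ≤ Z j2)
        ⊂ (Finset.univ.filter fun i => Z i ≤ Z j1) := by
      constructor
      · intro i hi
        simp only [Finset.mem_filter, Finset.mem_univ, true_and] at hi ⊢
        exact hi.trans hlt.le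
      · intro hsub'
        have := hsub' (by simp : j1 ∈ Finset.univ.filter fun i => Z i ≤ Z j1)
        simp only [Finset.mem_filter, Finset.mem_univ, true_and] at this
        exact absurd this (not_le.mpr hlt)
    have := Finset.card_lt_card hsub
    omega
  intro j1 j2 h
  simp only at h
  exact hZ (le_antisymm (key j1 j2 h) (key j2 j1 h.symm))

lemma rank_count {n : ℕ} (Z : Fin (n + 1) → ℝ) (hZ : Function.Injective Z)
    (k : ℕ) (hk1 : 1 ≤ k) (hk : k ≤ n + 1) :
    (Finset.univ.filter fun j : Fin (n + 1) =>
      (Finset.univ.filter fun i => Z i ≤ Z j).card ≤ k).card = k := by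
  classical
  set rank : Fin (n + 1) → ℕ := fun j => (Finset.univ.filter fun i => Z i ≤ Z j).card with hrank
  have hinj : Function.Injective rank := rank_injective Z hZ
  have himage : Finset.univ.image rank = Finset.Icc 1 (n + 1) := by
    apply Finset.eq_of_subset_of_card_le
    · intro m hm
      simp only [Finset.mem_image, Finset.mem_univ, true_and] at hm
      obtain ⟨j, rfl⟩ := hm
      simp only [Finset.mem_Icc]
      constructor
      · have : j ∈ Finset.univ.filter fun i => Z i ≤ Z j := by simp
        exact Finset.card_pos.mpr ⟨j, this⟩
      · calc rank j ≤ Finset.univ.card := Finset.card_filter_le _ _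
          _ = n + 1 := by simp
    · rw [Nat.card_Icc, Finset.card_image_of_injective _ hinj]
      simp
  have : (Finset.univ.filter fun j : Fin (n + 1) => rank j ≤ k).card
      = ((Finset.univ.image rank).filter fun m => m ≤ k).card := by
    rw [Finset.filter_image, Finset.card_image_of_injective _ hinj]
  rw [this, himage]
  have : (Finset.Icc 1 (n + 1)).filter (fun m => m ≤ k) = Finset.Icc 1 k := by
    ext m
    simp only [Finset.mem_filter, Finset.mem_Icc]
    omega
  rw [this, Nat.card_Icc]
  omega

/-- for a uniformly random permutation σ of {1, ..., n+1} and arbitrary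
distinct reals Z_1, ..., Z_{n+1}, the probability (fraction of the (n+1)! permutations)
that Z_{σ(n+1)} is at most the k-th smallest of Z_{σ(1)}, ..., Z_{σ(n)} equals k/(n+1),
for any k ≤ n. -/
theorem stmt_17 (n : ℕ) (Z : Fin (n + 1) → ℝ) (hZ : Function.Injective Z)
    (k : ℕ) (hk1 : 1 ≤ k) (hk : k ≤ n) :
    ((Finset.univ.filter fun σ : Equiv.Perm (Fin (n + 1)) =>
        Z (σ (Fin.last n)) ≤
          orderStat (List.ofFn fun i : Fin n => Z (σ i.castSucc)) k).card : ℝ) /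
      (Nat.factorial (n + 1)) = k / (n + 1) := by
  classical
  set rank : Fin (n + 1) → ℕ := fun j => (Finset.univ.filter fun i => Z i ≤ Z j).card with hrank
  -- Step 1: for each σ, the condition is equivalent to `rank (σ (last n)) ≤ k`
  have key : ∀ σ : Equiv.Perm (Fin (n + 1)),
      (Z (σ (Fin.last n)) ≤ orderStat (List.ofFn fun i : Fin n => Z (σ i.castSucc)) k)
        ↔ rank (σ (Fin.last n)) ≤ k := by
    intro σ
    set j := σ (Fin.last n) with hj
    set A : Finset ℝ := (Finset.univ.erase j).image Z with hA
    have hZinjOn : ∀ s : Finset (Fin (n+1)), Set.InjOn Z s := fun s => hZ.injOn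
    have hAcard : A.card = n := by
      rw [hA, Finset.card_image_of_injective _ hZ, Finset.card_erase_of_mem (Finset.mem_univ _)]
      simp
    have hkn : k - 1 < n := by omega
    -- identify the sorted list
    have hsorteq : (List.ofFn fun i : Fin n => Z (σ i.castSucc)).mergeSort
        (fun a b => decide (a ≤ b)) = Finset.sort A (· ≤ ·) := by
      apply fun hp h1 h2 => List.Perm.eq_of_pairwise' (r := ((· ≤ ·) : ℝ → ℝ → Prop)) h1 h2 hp
      · refine ((List.mergeSort_perm _ _).trans ?_)
        apply List.perm_of_nodup_nodup_toFinset_eq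
        · exact List.nodup_ofFn.mpr (fun a b hab => by
            exact Fin.castSucc_injective n (σ.injective (hZ hab)))
        · exact Finset.sort_nodup _ _
        · rw [Finset.sort_toFinset]
          ext x
          simp only [List.mem_toFinset, List.mem_ofFn, Set.mem_range, hA,
            Finset.mem_image, Finset.mem_erase, Finset.mem_univ, and_true]
          constructor
          · rintro ⟨i, rfl⟩
            refine ⟨σ i.castSucc, ⟨?_, rfl⟩⟩
            intro hcontra
            have := σ.injective hcontra
            exact absurd this (Fin.castSucc_lt_last i).ne
          · rintro ⟨m, hm, rfl⟩
            have hne : σ.symm m ≠ Fin.last n := by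
              intro hcontra
              apply hm
              have hmeq : m = σ (Fin.last n) := by rw [← hcontra]; simp
              exact hmeq
            have hlt : (σ.symm m : ℕ) < n := by
              have h2 := (σ.symm m).isLt
              rcases Nat.lt_or_ge ((σ.symm m : ℕ)) n with h | h
              · exact h
              · exfalso
                exact hne (Fin.ext (by simp only [Fin.val_last]; omega))
            refine ⟨⟨(σ.symm m : ℕ), hlt⟩, ?_⟩
            congr 1
            have hcast : Fin.castSucc ⟨(σ.symm m : ℕ), hlt⟩ = σ.symm m := Fin.ext rfl
            rw [hcast]
            simp
      · have hs := List.pairwise_mergeSort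
          (le := fun a b : ℝ => decide (a ≤ b))
          (fun a b c hab hbc => by
            simp only [decide_eq_true_eq] at *; exact le_trans hab hbc)
          (fun a b => by simp only [Bool.or_eq_true, decide_eq_true_eq]; exact le_total a b)
          (List.ofFn fun i : Fin n => Z (σ i.castSucc))
        refine List.Pairwise.imp ?_ hs
        intro a b h
        simpa using h
      · exact Finset.pairwise_sort _ _
    have horder : orderStat (List.ofFn fun i : Fin n => Z (σ i.castSucc)) k
        = A.orderEmbOfFin hAcard ⟨k - 1, hkn⟩ := by
      rw [orderStat, hsorteq, Finset.orderEmbOfFin_apply]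
      rw [List.getD_eq_getElem _ _ (by rw [Finset.length_sort, hAcard]; omega)]
      simp [Fin.getElem_fin]
    rw [horder, kth_le_iff]
    -- now translate counts
    have hAfilter : (A.filter (fun a => a < Z j)).card
        = (Finset.univ.filter fun i => Z i < Z j).card := by
      rw [hA, Finset.filter_image, Finset.card_image_of_injective _ hZ]
      congr 1
      ext i
      simp only [Finset.mem_filter, Finset.mem_erase, Finset.mem_univ, true_and, and_true]
      constructor
      · rintro ⟨_, h⟩; exact h
      · intro h; exact ⟨fun hij => by rw [hij] at h; exact lt_irrefl _ h, h⟩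
    have hrankeq : rank j = (Finset.univ.filter fun i => Z i < Z j).card + 1 := by
      have : (Finset.univ.filter fun i => Z i ≤ Z j)
          = insert j (Finset.univ.filter fun i => Z i < Z j) := by
        ext i
        simp only [Finset.mem_filter, Finset.mem_univ, true_and, Finset.mem_insert]
        constructor
        · intro h
          rcases eq_or_lt_of_le h with h' | h'
          · exact Or.inl (hZ h')
          · exact Or.inr h'
        · rintro (rfl | h)
          · exact le_refl _
          · exact h.le
      rw [hrank]
      simp only
      rw [this, Finset.card_insert_of_notMem (by simp)]
    rw [hAfilter]
    omega
  -- Step 2: count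
  have hcount : (Finset.univ.filter fun σ : Equiv.Perm (Fin (n + 1)) =>
      Z (σ (Fin.last n)) ≤
        orderStat (List.ofFn fun i : Fin n => Z (σ i.castSucc)) k).card
      = k * Nat.factorial n := by
    have : (Finset.univ.filter fun σ : Equiv.Perm (Fin (n + 1)) =>
        Z (σ (Fin.last n)) ≤
          orderStat (List.ofFn fun i : Fin n => Z (σ i.castSucc)) k)
        = (Finset.univ.filter fun σ : Equiv.Perm (Fin (n + 1)) =>
            rank (σ (Fin.last n)) ≤ k) := by
      ext σ
      simp only [Finset.mem_filter, Finset.mem_univ, true_and]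
      exact key σ
    rw [this]
    have h5 : (Finset.univ.filter fun j : Fin (n + 1) => rank j ≤ k).card = k := by
      have := rank_count Z hZ k hk1 (by omega)
      convert this using 2
    have h4 := count_subtype_perm (fun j => rank j ≤ k) (Fin.last n)
    have h6 : (Finset.filter (fun σ : Equiv.Perm (Fin (n + 1)) =>
        rank (σ (Fin.last n)) ≤ k) Finset.univ).card
        = (Finset.filter (fun j => rank j ≤ k) Finset.univ).card * Nat.factorial n := by
      convert h4 using 2 <;> congr!
    rw [h6, h5]
  rw [hcount]
  have hfact : (Nat.factorial (n + 1) : ℝ) = (n + 1) * Nat.factorial n := by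
    rw [Nat.factorial_succ]; push_cast; ring
  rw [hfact]
  have h1 : (Nat.factorial n : ℝ) ≠ 0 := Nat.cast_ne_zero.mpr (Nat.factorial_ne_zero n)
  have h2 : ((n : ℝ) + 1) ≠ 0 := by positivity
  push_cast
  field_simp
end
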